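/- arXiv:2112.12694 — 2 statements merged into one kernel-verified Lean document; each statement's English description precedes it below -/
import Mathlib

section
/- Let X = D^{-1}W with D admissible of order β and W Gaussian white noise. Then the covariance C = K of X lies in the tensorial Sobolev space HH_p(S²×S²) if and only if p < β − 1/2; specifically ‖K‖²_{HH_p} = Σ_{ℓ=0}^∞ (2ℓ+1)(1+ℓ(ℓ+1))^{2p} D_ℓ^{-4}, which is finite iff 4β − 4p − 1 > 1. -/
noncomputable section

abbrev Idx := Σ ℓ : ℕ, Fin (2 * ℓ + 1)

private lemma aux_sum_shift (s : ℝ) :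
    (Summable fun ℓ : ℕ => (1 + (ℓ : ℝ)) ^ s) ↔ s < -1 := by
  have h : (fun ℓ : ℕ => (1 + (ℓ : ℝ)) ^ s) = fun ℓ : ℕ => ((ℓ + 1 : ℕ) : ℝ) ^ s := by
    funext ℓ; push_cast; ring_nf
  rw [h]
  exact (summable_nat_add_iff (f := fun n : ℕ => (n : ℝ) ^ s) 1).trans Real.summable_nat_rpow

/-- Let `X = D⁻¹W` with `D` admissible of order `β` and `W` Gaussian white noise,
so that the covariance `C = K` of `X` has Fourier coefficients `δ_ℓ^{ℓ'}δ_m^{m'}/D_ℓ²`. Then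
`‖K‖²_{HH_p} = ∑_ℓ (2ℓ+1)(1+ℓ(ℓ+1))^{2p} D_ℓ^{-4}`, and `K ∈ HH_p` iff `p < β − 1/2`
(equivalently iff `4β − 4p − 1 > 1`). -/
theorem stmt14 (p β : ℝ) (hp : 0 ≤ p) (hβ : 1 < β)
    (D : ℕ → ℝ) (C₁ C₂ : ℝ) (hC₁ : 0 < C₁) (hC₂ : 0 < C₂)
    (hDne : ∀ ℓ : ℕ, D ℓ ≠ 0)
    (hDlow : ∀ ℓ : ℕ, C₁ * (1 + (ℓ : ℝ)) ^ β ≤ |D ℓ|)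
    (hDup : ∀ ℓ : ℕ, |D ℓ| ≤ C₂ * (1 + (ℓ : ℝ)) ^ β) :
    -- the HH_p squared norm of K reduces to the single series
    ((∑' ij : Idx × Idx,
        (1 + (ij.1.1 : ℝ) * ((ij.1.1 : ℝ) + 1)) ^ p * (1 + (ij.2.1 : ℝ) * ((ij.2.1 : ℝ) + 1)) ^ p
          * (if ij.1 = ij.2 then 1 / (D ij.1.1) ^ 2 else 0) ^ 2)
      = ∑' ℓ : ℕ, (2 * (ℓ : ℝ) + 1) * (1 + (ℓ : ℝ) * ((ℓ : ℝ) + 1)) ^ (2 * p) / (D ℓ) ^ 4) ∧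
    -- finiteness characterization
    ((Summable fun ℓ : ℕ =>
        (2 * (ℓ : ℝ) + 1) * (1 + (ℓ : ℝ) * ((ℓ : ℝ) + 1)) ^ (2 * p) / (D ℓ) ^ 4)
      ↔ p < β - 1 / 2) := by
  -- basic positivity facts
  have hbpos : ∀ ℓ : ℕ, (0:ℝ) < 1 + (ℓ:ℝ) * ((ℓ:ℝ) + 1) := by
    intro ℓ; positivity
  have hApos : ∀ ℓ : ℕ, (0:ℝ) < 1 + (ℓ:ℝ) := by intro ℓ; positivity
  have hD4pos : ∀ ℓ : ℕ, (0:ℝ) < (D ℓ) ^ 4 := by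
    intro ℓ; have h := hDne ℓ; positivity
  set g : Idx → ℝ := fun i =>
    (1 + (i.1 : ℝ) * ((i.1 : ℝ) + 1)) ^ (2 * p) / (D i.1) ^ 4 with hg
  set f : Idx × Idx → ℝ := fun ij =>
    (1 + (ij.1.1 : ℝ) * ((ij.1.1 : ℝ) + 1)) ^ p * (1 + (ij.2.1 : ℝ) * ((ij.2.1 : ℝ) + 1)) ^ p
      * (if ij.1 = ij.2 then 1 / (D ij.1.1) ^ 2 else 0) ^ 2 with hf
  have hdiag : ∀ i : Idx, f (i, i) = g i := by
    intro i
    simp only [hf, hg, eq_self_iff_true, if_true]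
    rw [div_pow, one_pow, ← pow_mul]
    rw [show (2:ℝ) * p = p + p by ring, Real.rpow_add (hbpos i.1)]
    ring_nf
  have hoff : ∀ ij : Idx × Idx, ij.1 ≠ ij.2 → f ij = 0 := by
    intro ij h
    simp [hf, if_neg h]
  -- step A : pair tsum = Idx tsum
  have stepA : (∑' ij : Idx × Idx, f ij) = ∑' i : Idx, g i := by
    apply tsum_eq_tsum_of_ne_zero_bij (fun x => ((x : Idx), (x : Idx)))
    · intro a b hab
      simpa [Prod.ext_iff, Subtype.ext_iff] using hab
    · intro ij hij
      have h1 : ij.1 = ij.2 := by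
        by_contra h; exact hij (hoff ij h)
      have h2 : g ij.1 ≠ 0 := by
        rw [← hdiag ij.1]
        have : ij = (ij.1, ij.1) := by
          cases ij; simp_all
        rwa [← this]
      exact ⟨⟨ij.1, h2⟩, by
        have : ij = (ij.1, ij.1) := by cases ij; simp_all
        simp [this.symm]⟩
    · intro x; exact hdiag x
  -- per-fiber sum
  have fiber : ∀ ℓ : ℕ, (∑' m : Fin (2 * ℓ + 1), g ⟨ℓ, m⟩)
      = (2 * (ℓ:ℝ) + 1) * (1 + (ℓ:ℝ) * ((ℓ:ℝ) + 1)) ^ (2 * p) / (D ℓ) ^ 4 := by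
    intro ℓ
    rw [tsum_fintype]
    simp only [hg]
    rw [Finset.sum_const, Finset.card_univ, Fintype.card_fin, nsmul_eq_mul, mul_div_assoc]
    push_cast
    ring
  have gnonneg : ∀ i : Idx, 0 ≤ g i := by
    intro i; simp only [hg]; positivity
  have hsig := summable_sigma_of_nonneg gnonneg
  have hfibsum : ∀ ℓ : ℕ, Summable fun m : Fin (2 * ℓ + 1) => g ⟨ℓ, m⟩ := by
    intro ℓ; exact Summable.of_finite
  -- step B
  have stepB : (∑' i : Idx, g i)
      = ∑' ℓ : ℕ, (2 * (ℓ:ℝ) + 1) * (1 + (ℓ:ℝ) * ((ℓ:ℝ) + 1)) ^ (2 * p) / (D ℓ) ^ 4 := by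
    by_cases hs : Summable g
    · rw [Summable.tsum_sigma' hfibsum hs]
      exact tsum_congr fiber
    · rw [tsum_eq_zero_of_not_summable hs, tsum_eq_zero_of_not_summable]
      intro hcon
      exact hs (hsig.2 ⟨hfibsum, by
        apply hcon.congr
        intro ℓ; rw [fiber ℓ]⟩)
  refine ⟨stepA.trans stepB, ?_⟩
  -- part 2
  set s : ℝ := 1 + 4 * p - 4 * β with hs
  set F : ℕ → ℝ := fun ℓ =>
    (2 * (ℓ:ℝ) + 1) * (1 + (ℓ:ℝ) * ((ℓ:ℝ) + 1)) ^ (2 * p) / (D ℓ) ^ 4 with hF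
  have hFnonneg : ∀ ℓ, 0 ≤ F ℓ := by intro ℓ; simp only [hF]; positivity
  -- rpow facts
  have hD4low : ∀ ℓ : ℕ, C₁ ^ 4 * (1 + (ℓ:ℝ)) ^ (4 * β) ≤ (D ℓ) ^ 4 := by
    intro ℓ
    have h1 : (C₁ * (1 + (ℓ:ℝ)) ^ β) ^ 4 ≤ |D ℓ| ^ 4 :=
      pow_le_pow_left₀ (by positivity) (hDlow ℓ) 4
    calc C₁ ^ 4 * (1 + (ℓ:ℝ)) ^ (4 * β)
        = (C₁ * (1 + (ℓ:ℝ)) ^ β) ^ 4 := by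
          rw [mul_pow, ← Real.rpow_natCast ((1 + (ℓ:ℝ)) ^ β) 4,
            ← Real.rpow_mul (hApos ℓ).le]
          norm_num [mul_comm]
      _ ≤ |D ℓ| ^ 4 := h1
      _ = (D ℓ) ^ 4 := by rw [← abs_pow, abs_of_nonneg (hD4pos ℓ).le]
  have hD4up : ∀ ℓ : ℕ, (D ℓ) ^ 4 ≤ C₂ ^ 4 * (1 + (ℓ:ℝ)) ^ (4 * β) := by
    intro ℓ
    have h1 : |D ℓ| ^ 4 ≤ (C₂ * (1 + (ℓ:ℝ)) ^ β) ^ 4 :=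
      pow_le_pow_left₀ (abs_nonneg _) (hDup ℓ) 4
    calc (D ℓ) ^ 4 = |D ℓ| ^ 4 := by rw [← abs_pow, abs_of_nonneg (hD4pos ℓ).le]
      _ ≤ (C₂ * (1 + (ℓ:ℝ)) ^ β) ^ 4 := h1
      _ = C₂ ^ 4 * (1 + (ℓ:ℝ)) ^ (4 * β) := by
          rw [mul_pow, ← Real.rpow_natCast ((1 + (ℓ:ℝ)) ^ β) 4,
            ← Real.rpow_mul (hApos ℓ).le]
          norm_num [mul_comm]
  have hNup : ∀ ℓ : ℕ, (2 * (ℓ:ℝ) + 1) * (1 + (ℓ:ℝ) * ((ℓ:ℝ) + 1)) ^ (2 * p)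
      ≤ 2 * (1 + (ℓ:ℝ)) ^ (1 + 4 * p) := by
    intro ℓ
    set x := (ℓ:ℝ)
    have hx : (0:ℝ) ≤ x := Nat.cast_nonneg ℓ
    have h1 : (1 + x * (x + 1)) ^ (2 * p) ≤ (1 + x) ^ (4 * p) := by
      have e : ((1 + x) * (1 + x)) ^ (2 * p) = (1 + x) ^ (4 * p) := by
        rw [Real.mul_rpow (hApos ℓ).le (hApos ℓ).le, ← Real.rpow_add (hApos ℓ)]
        congr 1; ring
      rw [← e]
      exact Real.rpow_le_rpow (hbpos ℓ).le (by nlinarith) (by positivity)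
    have h2 : 2 * x + 1 ≤ 2 * (1 + x) := by linarith
    calc (2 * x + 1) * (1 + x * (x + 1)) ^ (2 * p)
        ≤ 2 * (1 + x) * (1 + x) ^ (4 * p) := by
          apply mul_le_mul h2 h1 (by positivity) (by positivity)
      _ = 2 * (1 + x) ^ (1 + 4 * p) := by
          rw [Real.rpow_add (hApos ℓ), Real.rpow_one]; ring
  have hNlow : ∀ ℓ : ℕ, (2:ℝ) ^ (2 * p)⁻¹ * 0 ≤ 0 := by intro ℓ; simp
  have hNlow' : ∀ ℓ : ℕ, ((2:ℝ) ^ (2 * p))⁻¹ * (1 + (ℓ:ℝ)) ^ (1 + 4 * p)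
      ≤ (2 * (ℓ:ℝ) + 1) * (1 + (ℓ:ℝ) * ((ℓ:ℝ) + 1)) ^ (2 * p) := by
    intro ℓ
    set x := (ℓ:ℝ)
    have hx : (0:ℝ) ≤ x := Nat.cast_nonneg ℓ
    have h1 : (1 + x) ^ (4 * p) / (2:ℝ) ^ (2 * p) ≤ (1 + x * (x + 1)) ^ (2 * p) := by
      have e : ((1 + x) * (1 + x) / 2) ^ (2 * p) = (1 + x) ^ (4 * p) / (2:ℝ) ^ (2 * p) := by
        rw [Real.div_rpow (by positivity) (by norm_num),
          Real.mul_rpow (hApos ℓ).le (hApos ℓ).le, ← Real.rpow_add (hApos ℓ)]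
        congr 1
        · congr 1; ring
      rw [← e]
      exact Real.rpow_le_rpow (by positivity) (by nlinarith) (by positivity)
    have h2 : (1 + x) ≤ 2 * x + 1 := by linarith
    calc ((2:ℝ) ^ (2 * p))⁻¹ * (1 + x) ^ (1 + 4 * p)
        = (1 + x) * ((1 + x) ^ (4 * p) / (2:ℝ) ^ (2 * p)) := by
          rw [Real.rpow_add (hApos ℓ), Real.rpow_one]; ring
      _ ≤ (2 * x + 1) * (1 + x * (x + 1)) ^ (2 * p) :=
          mul_le_mul h2 h1 (by positivity) (by positivity)
  have hub : ∀ ℓ : ℕ, F ℓ ≤ (2 / C₁ ^ 4) * (1 + (ℓ:ℝ)) ^ s := by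
    intro ℓ
    have hsplit : (1 + (ℓ:ℝ)) ^ (1 + 4 * p) = (1 + (ℓ:ℝ)) ^ s * (1 + (ℓ:ℝ)) ^ (4 * β) := by
      rw [← Real.rpow_add (hApos ℓ)]; congr 1; rw [hs]; ring
    have hY := (Real.rpow_pos_of_pos (hApos ℓ) (4 * β)).ne'
    have key : (2:ℝ) * (1 + (ℓ:ℝ)) ^ (1 + 4 * p) / (C₁ ^ 4 * (1 + (ℓ:ℝ)) ^ (4 * β))
        = (2 / C₁ ^ 4) * (1 + (ℓ:ℝ)) ^ s := by
      rw [hsplit]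
      field_simp
    rw [← key]
    exact div_le_div₀ (by positivity) (hNup ℓ) (by positivity) (hD4low ℓ)
  have hlb : ∀ ℓ : ℕ, (((2:ℝ) ^ (2 * p))⁻¹ / C₂ ^ 4) * (1 + (ℓ:ℝ)) ^ s ≤ F ℓ := by
    intro ℓ
    have hsplit : (1 + (ℓ:ℝ)) ^ (1 + 4 * p) = (1 + (ℓ:ℝ)) ^ s * (1 + (ℓ:ℝ)) ^ (4 * β) := by
      rw [← Real.rpow_add (hApos ℓ)]; congr 1; rw [hs]; ring
    have hY := (Real.rpow_pos_of_pos (hApos ℓ) (4 * β)).ne'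
    have h2p := (Real.rpow_pos_of_pos (by norm_num : (0:ℝ) < 2) (2 * p)).ne'
    have key : ((2:ℝ) ^ (2 * p))⁻¹ * (1 + (ℓ:ℝ)) ^ (1 + 4 * p) / (C₂ ^ 4 * (1 + (ℓ:ℝ)) ^ (4 * β))
        = (((2:ℝ) ^ (2 * p))⁻¹ / C₂ ^ 4) * (1 + (ℓ:ℝ)) ^ s := by
      rw [hsplit]
      field_simp
    rw [← key]
    exact div_le_div₀ (by positivity) (hNlow' ℓ) (hD4pos ℓ) (hD4up ℓ)
  have hiff : s < -1 ↔ p < β - 1 / 2 := by rw [hs]; constructor <;> intro <;> linarith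
  constructor
  · intro hsum
    rw [← hiff, ← aux_sum_shift s]
    have c : (0:ℝ) < ((2:ℝ) ^ (2 * p))⁻¹ / C₂ ^ 4 := by positivity
    have := (hsum.mul_left (((2:ℝ) ^ (2 * p))⁻¹ / C₂ ^ 4)⁻¹)
    apply this.of_nonneg_of_le (fun ℓ => by positivity)
    intro ℓ
    rw [inv_mul_eq_div, le_div_iff₀ c, mul_comm]
    exact hlb ℓ
  · intro hs2
    have hsums : Summable fun ℓ : ℕ => (1 + (ℓ:ℝ)) ^ s := (aux_sum_shift s).2 (hiff.2 hs2)
    exact (hsums.mul_left (2 / C₁ ^ 4)).of_nonneg_of_le hFnonneg hub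
end
end

section
/- Let {Dℓ²}_{ℓ≥0} with Dℓ² = (1+ℓ(ℓ+1))^p, p > 1, and η ∈ (0,1]. Then for every α ∈ [0,1] with α + 1/p < 2, Σ_{ℓ=0}^∞ (2ℓ+1) Dℓ^{2α}/(1+ηDℓ²)² = O(1 + η^{-(α+1/p)}) as η → 0; i.e., there is a constant c depending only on p and α such that the sum is at most c(1 + η^{-(α+1/p)}) for all η ∈ (0,1]. -/
noncomputable section

open Real

/-- The summand. -/
noncomputable def myF (p α η : ℝ) (ℓ : ℕ) : ℝ :=
  (2 * (ℓ : ℝ) + 1) * (1 + (ℓ : ℝ) * ((ℓ : ℝ) + 1)) ^ (p * α)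
    / (1 + η * (1 + (ℓ : ℝ) * ((ℓ : ℝ) + 1)) ^ p) ^ 2

/-- A Bernoulli-type telescoping estimate. -/
lemma aux_bern {b r : ℝ} (hb : 1 ≤ b) (hr : 1 < r) :
    (r - 1) * (2 * b) ^ (-r) ≤ b ^ (1 - r) - (b + 1) ^ (1 - r) := by
  have hb0 : 0 < b := by linarith
  have hb1 : (0:ℝ) < b + 1 := by linarith
  set X := b ^ r with hX
  set Y := (b + 1) ^ r with hY
  have hX0 : 0 < X := rpow_pos_of_pos hb0 r
  have hY0 : 0 < Y := rpow_pos_of_pos hb1 r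
  have hob : (0:ℝ) < 1 / b := by positivity
  have hbern : 1 + r * (1 / b) ≤ (1 + 1 / b) ^ r :=
    one_add_mul_self_le_rpow_one_add (by linarith) hr.le
  have hdiv : (1 + 1 / b) ^ r = Y / X := by
    rw [hX, hY, ← Real.div_rpow hb1.le hb0.le]
    congr 1
    field_simp
  rw [hdiv] at hbern
  have h4 : (1 + r * (1 / b)) * X ≤ Y := (le_div_iff₀ hX0).mp hbern
  have h5 : b * ((1 + r * (1 / b)) * X) ≤ b * Y := mul_le_mul_of_nonneg_left h4 hb0.le
  have h6 : b * ((1 + r * (1 / b)) * X) = (b + r) * X := by field_simp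
  have key : (b + r) * X ≤ b * Y := by linarith
  have hstep : (b + r) / Y ≤ b / X := (div_le_div_iff₀ hY0 hX0).mpr key
  have e1 : b ^ (1 - r) = b / X := by
    rw [hX, Real.rpow_sub hb0, Real.rpow_one]
  have e2 : (b + 1) ^ (1 - r) = (b + 1) / Y := by
    rw [hY, Real.rpow_sub hb1, Real.rpow_one]
  have e3 : (2 * b) ^ (-r) ≤ 1 / Y := by
    have h2 : (2 * b) ^ (-r) ≤ (b + 1) ^ (-r) :=
      rpow_le_rpow_of_nonpos hb1 (by linarith) (by linarith)
    have h3 : (b + 1) ^ (-r) = 1 / Y := by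
      rw [hY, Real.rpow_neg hb1.le, one_div]
    linarith [h3.le, h3.ge]
  have hfin : (r - 1) * ((2 * b) ^ (-r)) ≤ (r - 1) * (1 / Y) :=
    mul_le_mul_of_nonneg_left e3 (by linarith)
  rw [e1, e2]
  have hsplit : (b + r) / Y = (r - 1) * (1 / Y) + (b + 1) / Y := by ring
  linarith

/-- Tail estimate for a `p`-series. -/
lemma aux_tail {r : ℝ} (hr : 1 < r) {N : ℕ} (hN : 1 ≤ N) :
    ∑' i : ℕ, ((i + N : ℕ) : ℝ) ^ (-r) ≤ 2 ^ r / (r - 1) * (N : ℝ) ^ (1 - r) := by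
  have h2r : (0:ℝ) < 2 ^ r := rpow_pos_of_pos two_pos r
  have hrr : (0:ℝ) < r - 1 := by linarith
  have hC : (0:ℝ) < 2 ^ r / (r - 1) := by positivity
  set g : ℕ → ℝ := fun k => ((k + N : ℕ) : ℝ) ^ (1 - r) with hg
  apply Real.tsum_le_of_sum_range_le
  · intro n
    positivity
  · intro n
    have hterm : ∀ i : ℕ, ((i + N : ℕ) : ℝ) ^ (-r) ≤ 2 ^ r / (r - 1) * (g i - g (i + 1)) := by
      intro i
      set b : ℝ := ((i + N : ℕ) : ℝ) with hb'
      have hb : (1:ℝ) ≤ b := by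
        rw [hb']; exact_mod_cast Nat.one_le_iff_ne_zero.mpr (by omega)
      have hb0 : (0:ℝ) < b := by linarith
      have hbern := aux_bern hb hr
      have hcast : ((i + 1 + N : ℕ) : ℝ) = b + 1 := by rw [hb']; push_cast; ring
      have hmul : (2 * b) ^ (-r) = (2:ℝ) ^ (-r) * b ^ (-r) :=
        Real.mul_rpow (by norm_num) hb0.le
      have hinv : (2:ℝ) ^ (-r) = ((2:ℝ) ^ r)⁻¹ := Real.rpow_neg (by norm_num) r
      have hgi : g i = b ^ (1 - r) := by rw [hg]
      have hgi1 : g (i + 1) = (b + 1) ^ (1 - r) := by rw [hg]; simp only; rw [hcast]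
      rw [hmul, hinv] at hbern
      have heq : b ^ (-r) = 2 ^ r / (r - 1) * ((r - 1) * (((2:ℝ) ^ r)⁻¹ * b ^ (-r))) := by
        field_simp
      rw [heq, hgi, hgi1]
      exact mul_le_mul_of_nonneg_left hbern hC.le
    calc ∑ i ∈ Finset.range n, ((i + N : ℕ) : ℝ) ^ (-r)
        ≤ ∑ i ∈ Finset.range n, 2 ^ r / (r - 1) * (g i - g (i + 1)) :=
          Finset.sum_le_sum fun i _ => hterm i
      _ = 2 ^ r / (r - 1) * (g 0 - g n) := by rw [← Finset.mul_sum, Finset.sum_range_sub' g]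
      _ ≤ 2 ^ r / (r - 1) * g 0 := by
          have : (0:ℝ) ≤ g n := by rw [hg]; positivity
          nlinarith
      _ = 2 ^ r / (r - 1) * (N : ℝ) ^ (1 - r) := by rw [hg]; norm_num

/-- Pointwise bound on the summand, used in the tail. -/
lemma aux_term {p α η : ℝ} (hp : 1 < p) (hα1 : α ≤ 1) (hη : 0 < η)
    {ℓ : ℕ} (hℓ : 1 ≤ ℓ) :
    myF p α η ℓ ≤ 3 / η ^ 2 * (ℓ : ℝ) ^ (2 * p * α - 4 * p + 1) := by
  unfold myF
  have hx1 : (1:ℝ) ≤ (ℓ:ℝ) := by exact_mod_cast hℓ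
  have hx0 : (0:ℝ) < (ℓ:ℝ) := by linarith
  set x : ℝ := (ℓ:ℝ) with hxdef
  set a : ℝ := 1 + x * (x + 1) with hadef
  have ha1 : (1:ℝ) ≤ a := by nlinarith
  have ha0 : (0:ℝ) < a := by linarith
  have hap : (0:ℝ) < a ^ p := rpow_pos_of_pos ha0 p
  have hq : p * α - p * 2 ≤ 0 := by nlinarith
  have hnum : (0:ℝ) ≤ (2 * x + 1) * a ^ (p * α) := by positivity
  have h1 : (2 * x + 1) * a ^ (p * α) / (1 + η * a ^ p) ^ 2
      ≤ (2 * x + 1) * a ^ (p * α) / (η * a ^ p) ^ 2 := by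
    gcongr
    linarith
  have e1 : (η * a ^ p) ^ 2 = η ^ 2 * a ^ (p * 2) := by
    rw [mul_pow, ← Real.rpow_natCast (a ^ p) 2, ← Real.rpow_mul ha0.le]
    norm_num
  have e2 : (2 * x + 1) * a ^ (p * α) / (η ^ 2 * a ^ (p * 2))
      = (2 * x + 1) * a ^ (p * α - p * 2) / η ^ 2 := by
    rw [Real.rpow_sub ha0]
    field_simp
  have hxa : x ^ 2 ≤ a := by nlinarith
  have h5 : a ^ (p * α - p * 2) ≤ (x ^ 2) ^ (p * α - p * 2) :=
    rpow_le_rpow_of_nonpos (by positivity) hxa hq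
  have h6 : (x ^ 2) ^ (p * α - p * 2) = x ^ (2 * (p * α - p * 2)) := by
    rw [← Real.rpow_natCast x 2, ← Real.rpow_mul hx0.le]
    norm_num
  have h7 : x * x ^ (2 * (p * α - p * 2)) = x ^ (2 * p * α - 4 * p + 1) := by
    rw [show 2 * p * α - 4 * p + 1 = 2 * (p * α - p * 2) + 1 by ring,
      Real.rpow_add hx0, Real.rpow_one]
    ring
  have h8 : (2 * x + 1) * a ^ (p * α - p * 2) ≤ 3 * x ^ (2 * p * α - 4 * p + 1) := by
    have hmm : (2 * x + 1) * a ^ (p * α - p * 2) ≤ (3 * x) * ((x ^ 2) ^ (p * α - p * 2)) :=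
      mul_le_mul (by linarith) h5 (rpow_nonneg ha0.le _) (by linarith)
    calc (2 * x + 1) * a ^ (p * α - p * 2) ≤ (3 * x) * ((x ^ 2) ^ (p * α - p * 2)) := hmm
      _ = 3 * (x * x ^ (2 * (p * α - p * 2))) := by rw [h6]; ring
      _ = 3 * x ^ (2 * p * α - 4 * p + 1) := by rw [h7]
  calc (2 * x + 1) * a ^ (p * α) / (1 + η * a ^ p) ^ 2
      ≤ (2 * x + 1) * a ^ (p * α) / (η * a ^ p) ^ 2 := h1
    _ = (2 * x + 1) * a ^ (p * α - p * 2) / η ^ 2 := by rw [e1, e2]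
    _ ≤ 3 * x ^ (2 * p * α - 4 * p + 1) / η ^ 2 := by gcongr
    _ = 3 / η ^ 2 * x ^ (2 * p * α - 4 * p + 1) := by ring

lemma myF_nonneg {p α η : ℝ} (hη : 0 < η) (ℓ : ℕ) : 0 ≤ myF p α η ℓ := by
  unfold myF
  have hb : (0:ℝ) ≤ 1 + (ℓ:ℝ) * ((ℓ:ℝ) + 1) := by positivity
  positivity

lemma myF_le {p α η : ℝ} (hp : 1 < p) (hα1 : α ≤ 1) (hη : 0 < η)
    {ℓ : ℕ} (hℓ : 1 ≤ ℓ) {r : ℝ} (hrdef : r = 4 * p - 2 * p * α - 1) :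
    myF p α η ℓ ≤ 3 / η ^ 2 * (ℓ : ℝ) ^ (-r) := by
  have h := aux_term hp hα1 hη hℓ
  rw [show 2 * p * α - 4 * p + 1 = -r by rw [hrdef]; ring] at h
  exact h

lemma head_sum_le {p α η : ℝ} (hp0 : 0 < p) (hα0 : 0 ≤ α) (hη : 0 < η) {N : ℕ}
    (hN1 : (1:ℝ) ≤ (N:ℝ)) :
    ∑ ℓ ∈ Finset.range N, myF p α η ℓ ≤ (2 * (N:ℝ) ^ 2) ^ (p * α + 1) := by
  have hbound : ∀ ℓ ∈ Finset.range N,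
      myF p α η ℓ ≤ 2 * (N:ℝ) * (2 * (N:ℝ) ^ 2) ^ (p * α) := by
    intro ℓ hℓ
    rw [Finset.mem_range] at hℓ
    have hxN : (ℓ:ℝ) + 1 ≤ (N:ℝ) := by exact_mod_cast hℓ
    have hx0 : (0:ℝ) ≤ (ℓ:ℝ) := Nat.cast_nonneg ℓ
    have hb : (0:ℝ) ≤ 1 + (ℓ:ℝ) * ((ℓ:ℝ) + 1) := by positivity
    have haN : 1 + (ℓ:ℝ) * ((ℓ:ℝ) + 1) ≤ 2 * (N:ℝ) ^ 2 := by nlinarith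
    have hd : (1:ℝ) ≤ (1 + η * (1 + (ℓ:ℝ) * ((ℓ:ℝ) + 1)) ^ p) ^ 2 := by
      have h9 : (0:ℝ) ≤ η * (1 + (ℓ:ℝ) * ((ℓ:ℝ) + 1)) ^ p := by positivity
      nlinarith
    calc myF p α η ℓ ≤ (2 * (ℓ:ℝ) + 1) * (1 + (ℓ:ℝ) * ((ℓ:ℝ) + 1)) ^ (p * α) := by
          unfold myF
          exact div_le_self (by positivity) hd
      _ ≤ 2 * (N:ℝ) * (2 * (N:ℝ) ^ 2) ^ (p * α) := by
          apply mul_le_mul (by linarith) (rpow_le_rpow hb haN (by positivity))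
            (rpow_nonneg hb _) (by linarith)
  calc ∑ ℓ ∈ Finset.range N, myF p α η ℓ
      ≤ (N:ℝ) * (2 * (N:ℝ) * (2 * (N:ℝ) ^ 2) ^ (p * α)) := by
        have := Finset.sum_le_card_nsmul (Finset.range N) _ _ hbound
        rwa [Finset.card_range, nsmul_eq_mul] at this
    _ = (2 * (N:ℝ) ^ 2) ^ (p * α + 1) := by
        rw [Real.rpow_add (by nlinarith [hN1]), Real.rpow_one]
        ring


lemma tail_sum_le {p α η : ℝ} (hp : 1 < p) (hα1 : α ≤ 1) (hη : 0 < η) {r : ℝ}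
    (hrdef : r = 4 * p - 2 * p * α - 1) (hr : 1 < r) {N : ℕ} (hN : 1 ≤ N)
    (hsum : Summable (myF p α η)) :
    ∑' i : ℕ, myF p α η (i + N) ≤ 3 / η ^ 2 * (2 ^ r / (r - 1) * (N : ℝ) ^ (1 - r)) := by
  have hsum1 : Summable fun i : ℕ => myF p α η (i + N) :=
    (summable_nat_add_iff N).mpr hsum
  have hsum2 : Summable fun i : ℕ => 3 / η ^ 2 * ((i + N : ℕ) : ℝ) ^ (-r) := by
    apply Summable.mul_left
    exact (summable_nat_add_iff N).mpr (Real.summable_nat_rpow.mpr (by linarith))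
  have h1 : ∑' i : ℕ, myF p α η (i + N)
      ≤ ∑' i : ℕ, 3 / η ^ 2 * ((i + N : ℕ) : ℝ) ^ (-r) :=
    hsum1.tsum_le_tsum (fun i => myF_le hp hα1 hη (by omega) hrdef) hsum2
  have h2 : ∑' i : ℕ, 3 / η ^ 2 * ((i + N : ℕ) : ℝ) ^ (-r)
      = 3 / η ^ 2 * ∑' i : ℕ, ((i + N : ℕ) : ℝ) ^ (-r) := tsum_mul_left
  have h3 := aux_tail hr hN
  calc ∑' i : ℕ, myF p α η (i + N)
      ≤ 3 / η ^ 2 * ∑' i : ℕ, ((i + N : ℕ) : ℝ) ^ (-r) := by rw [← h2]; exact h1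
    _ ≤ 3 / η ^ 2 * (2 ^ r / (r - 1) * (N:ℝ) ^ (1 - r)) :=
        mul_le_mul_of_nonneg_left h3 (by positivity)

lemma exists_E {p α η : ℝ} (hp0 : 0 < p) (hη0 : 0 < η) (hη1 : η ≤ 1) {r : ℝ}
    (hrdef : r = 4 * p - 2 * p * α - 1) :
    ∃ E : ℝ, 0 < E ∧ 1 ≤ E ∧
      (8 * E ^ 2) ^ (p * α + 1) = 8 ^ (p * α + 1) * η ^ (-(α + 1 / p)) ∧
      3 / η ^ 2 * (2 ^ r / (r - 1) * E ^ (1 - r))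
        = 3 * (2 ^ r / (r - 1)) * η ^ (-(α + 1 / p)) := by
  refine ⟨η ^ (-(1 / (2 * p))), rpow_pos_of_pos hη0 _, ?_, ?_, ?_⟩
  · apply one_le_rpow_of_pos_of_le_one_of_nonpos hη0 hη1
    have : 0 < 1 / (2 * p) := by positivity
    linarith
  · have hEsq : (η ^ (-(1 / (2 * p)))) ^ 2 = η ^ (-(1 / p)) := by
      rw [← Real.rpow_natCast (η ^ (-(1 / (2 * p)))) 2, ← Real.rpow_mul hη0.le]
      congr 1
      push_cast
      field_simp
    rw [Real.mul_rpow (by norm_num) (by positivity), hEsq, ← Real.rpow_mul hη0.le]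
    congr 2
    field_simp
  · have e1 : (η ^ (-(1 / (2 * p)))) ^ (1 - r) = η ^ (-(1 / (2 * p)) * (1 - r)) :=
      (Real.rpow_mul hη0.le _ _).symm
    have e2 : -(1 / (2 * p)) * (1 - r) = -(α + 1 / p) + 2 := by
      rw [hrdef]; field_simp; ring
    have e3 : η ^ (-(α + 1 / p) + 2) = η ^ (-(α + 1 / p)) * η ^ 2 := by
      rw [Real.rpow_add hη0, ← Real.rpow_natCast η 2]; norm_num
    rw [e1, e2, e3]
    have hη2 : η ^ 2 ≠ 0 := by positivity
    set C := (2:ℝ) ^ r / (r - 1) with hC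
    field_simp

set_option maxHeartbeats 1000000 in
/-- With `D_ℓ² = (1+ℓ(ℓ+1))^p`, `p > 1`, and `α ∈ [0,1]` with `α + 1/p < 2`,
`∑_ℓ (2ℓ+1) D_ℓ^{2α}/(1+ηD_ℓ²)² = O(1 + η^{-(α+1/p)})` uniformly over `η ∈ (0,1]`. -/
theorem stmt16 (p α : ℝ) (hp : 1 < p) (hα : α ∈ Set.Icc (0 : ℝ) 1)
    (hα2 : α + 1 / p < 2) :
    ∃ c : ℝ, 0 < c ∧ ∀ η : ℝ, η ∈ Set.Ioc (0 : ℝ) 1 →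
      (∑' ℓ : ℕ, (2 * (ℓ : ℝ) + 1) * ((1 + (ℓ : ℝ) * ((ℓ : ℝ) + 1)) ^ p) ^ α
          / (1 + η * (1 + (ℓ : ℝ) * ((ℓ : ℝ) + 1)) ^ p) ^ 2)
        ≤ c * (1 + η ^ (-(α + 1 / p))) := by
  obtain ⟨hα0, hα1⟩ := hα
  have hp0 : (0:ℝ) < p := by linarith
  have hpa : α * p + 1 < 2 * p := by
    have h := mul_lt_mul_of_pos_right hα2 hp0
    rw [add_mul, one_div, inv_mul_cancel₀ hp0.ne'] at h
    linarith
  set r : ℝ := 4 * p - 2 * p * α - 1 with hrdef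
  have hr : 1 < r := by rw [hrdef]; nlinarith
  have hA : (0:ℝ) < (8:ℝ) ^ (p * α + 1) := rpow_pos_of_pos (by norm_num) _
  have hB : (0:ℝ) < 2 ^ r / (r - 1) := div_pos (rpow_pos_of_pos two_pos r) (by linarith)
  refine ⟨(8:ℝ) ^ (p * α + 1) + 3 * (2 ^ r / (r - 1)) + 1, by linarith, ?_⟩
  rintro η ⟨hη0, hη1⟩
  have hX : (0:ℝ) ≤ η ^ (-(α + 1 / p)) := (rpow_pos_of_pos hη0 _).le
  have hcong : (∑' ℓ : ℕ, (2 * (ℓ : ℝ) + 1) * ((1 + (ℓ : ℝ) * ((ℓ : ℝ) + 1)) ^ p) ^ α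
      / (1 + η * (1 + (ℓ : ℝ) * ((ℓ : ℝ) + 1)) ^ p) ^ 2) = ∑' ℓ, myF p α η ℓ := by
    apply tsum_congr
    intro ℓ
    unfold myF
    have hb : (0:ℝ) ≤ 1 + (ℓ:ℝ) * ((ℓ:ℝ) + 1) := by positivity
    rw [Real.rpow_mul hb]
  rw [hcong]
  obtain ⟨E, hE0, hE1, hconv1, hconv2⟩ := exists_E (α := α) hp0 hη0 hη1 hrdef
  obtain ⟨N, hN1, hNE, hN2⟩ : ∃ N : ℕ, 1 ≤ N ∧ E ≤ (N:ℝ) ∧ (N:ℝ) ≤ 2 * E := by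
    refine ⟨⌈E⌉₊, Nat.ceil_pos.mpr hE0, Nat.le_ceil E, ?_⟩
    have := Nat.ceil_lt_add_one hE0.le (R := ℝ)
    linarith
  have hN1' : (1:ℝ) ≤ (N:ℝ) := by exact_mod_cast hN1
  -- summability
  have hgsum : Summable fun ℓ : ℕ => 3 / η ^ 2 * (ℓ : ℝ) ^ (-r) :=
    (Real.summable_nat_rpow.mpr (by linarith)).mul_left _
  have hsum : Summable (myF p α η) := by
    rw [← summable_nat_add_iff 1]
    apply Summable.of_nonneg_of_le (fun n => myF_nonneg hη0 _)
      (fun n => myF_le hp hα1 hη0 (by omega) hrdef)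
    exact (summable_nat_add_iff 1).mpr hgsum
  rw [← Summable.sum_add_tsum_nat_add N hsum]
  -- head estimate
  have hNsq : 2 * (N:ℝ) ^ 2 ≤ 8 * E ^ 2 := by
    have h1 : (N:ℝ) ^ 2 ≤ (2 * E) ^ 2 := by
      apply pow_le_pow_left₀ (by positivity) hN2
    have h2 : (2 * E) ^ 2 = 4 * E ^ 2 := by ring
    linarith
  have hhead : ∑ ℓ ∈ Finset.range N, myF p α η ℓ
      ≤ (8:ℝ) ^ (p * α + 1) * η ^ (-(α + 1 / p)) := by
    calc ∑ ℓ ∈ Finset.range N, myF p α η ℓ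
        ≤ (2 * (N:ℝ) ^ 2) ^ (p * α + 1) := head_sum_le hp0 hα0 hη0 hN1'
      _ ≤ (8 * E ^ 2) ^ (p * α + 1) :=
          rpow_le_rpow (by positivity) hNsq (by positivity)
      _ = (8:ℝ) ^ (p * α + 1) * η ^ (-(α + 1 / p)) := hconv1
  -- tail estimate
  have htail : ∑' i : ℕ, myF p α η (i + N)
      ≤ 3 * (2 ^ r / (r - 1)) * η ^ (-(α + 1 / p)) := by
    have h4 : ((N:ℝ)) ^ (1 - r) ≤ E ^ (1 - r) :=
      rpow_le_rpow_of_nonpos hE0 hNE (by linarith)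
    calc ∑' i : ℕ, myF p α η (i + N)
        ≤ 3 / η ^ 2 * (2 ^ r / (r - 1) * (N:ℝ) ^ (1 - r)) :=
          tail_sum_le hp hα1 hη0 hrdef hr hN1 hsum
      _ ≤ 3 / η ^ 2 * (2 ^ r / (r - 1) * E ^ (1 - r)) := by
          apply mul_le_mul_of_nonneg_left _ (by positivity)
          exact mul_le_mul_of_nonneg_left h4 hB.le
      _ = 3 * (2 ^ r / (r - 1)) * η ^ (-(α + 1 / p)) := hconv2
  nlinarith [hA, hB, hX, hhead, htail]
end
end
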